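/- arXiv:1403.4813 — 2 statements merged into one kernel-verified Lean document; each statement's English description precedes it below -/
import Mathlib

section
/- Let s₀ be a state, A ⊆ enabled(s₀) a nonempty 'ample' set, and let π = s₀ →α₀ s₁ → ... →α_{n-1} s_n be an execution fragment ending in a deadlock state s_n (i.e., enabled(s_n) = ∅). Assume condition C1: along every execution fragment starting at s₀, no action dependent on an action of A occurs before some action of A occurs. Then some α_k with 0 ≤ k < n belongs to A. -/
/-- An action-deterministic transition system: each action has at most one
successor from each state, given by a partial step function. -/
structure TS (S A : Type) where
  step : A → S → Option S

namespace TS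

variable {S A : Type}

/-- An action is enabled in a state if it has a successor. -/
def Enabled (T : TS S A) (a : A) (s : S) : Prop := (T.step a s).isSome

/-- `I` is an independence relation: for every state where two distinct
`I`-related actions are both enabled, each remains enabled after the other
(enabledness) and the two execution orders yield the same state (commutativity). -/
def IndepRel (T : TS S A) (I : A → A → Prop) : Prop :=
  ∀ a b s, I a b → a ≠ b → T.Enabled a s → T.Enabled b s →
    ∃ sa sb, T.step a s = some sa ∧ T.step b s = some sb ∧
      T.Enabled b sa ∧ T.Enabled a sb ∧ T.step b sa = T.step a sb

/-- A deadlock state: no action is enabled. -/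
def Deadlock (T : TS S A) (s : S) : Prop := ∀ a : A, ¬ T.Enabled a s

/-- `Run T l s t`: an execution fragment from `s` to `t` whose sequence of
action labels is `l` (so its length is `l.length`). -/
inductive Run (T : TS S A) : List A → S → S → Prop
  | nil (s : S) : Run T [] s s
  | cons {a : A} {l : List A} {s s' t : S} :
      T.step a s = some s' → Run T l s' t → Run T (a :: l) s t

/-- `ARun T amp l s t`: an execution fragment in the reduced graph that keeps,
from each state `u`, only the transitions labeled by actions in `amp u`. -/
inductive ARun (T : TS S A) (amp : S → Set A) : List A → S → S → Prop
  | nil (s : S) : ARun T amp [] s s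
  | cons {a : A} {l : List A} {s s' t : S} :
      a ∈ amp s → T.step a s = some s' → ARun T amp l s' t → ARun T amp (a :: l) s t

end TS

/-!
If no action of `π` lay in `Amp`, condition C1 applied to each prefix of `π` would make every
action of `π` independent of a fixed `b ∈ Amp`. Independent actions preserve the enabledness of
`b`, so `b`, enabled at `s₀`, would still be enabled in the deadlock state `s_n`.
-/

namespace TS

variable {S A : Type} {T : TS S A}

theorem Run.exists_of_append {l₁ l₂ : List A} {s t : S} (h : T.Run (l₁ ++ l₂) s t) :
    ∃ u, T.Run l₁ s u ∧ T.Run l₂ u t := by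
  induction l₁ generalizing s with
  | nil => exact ⟨s, .nil s, h⟩
  | cons a l₁ ih =>
    obtain _ | ⟨hstep, hrest⟩ := h
    obtain ⟨u, hl₁, hl₂⟩ := ih hrest
    exact ⟨u, .cons hstep hl₁, hl₂⟩

theorem Run.exists_prefix_concat {l : List A} {s t : S} {a : A} (h : T.Run l s t) (ha : a ∈ l) :
    ∃ p u, p ++ [a] <+: l ∧ T.Run (p ++ [a]) s u := by
  obtain ⟨p, q, rfl⟩ := List.append_of_mem ha
  rw [List.append_cons] at h
  obtain ⟨u, hp, -⟩ := h.exists_of_append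
  exact ⟨p, u, ⟨q, (List.append_cons p a q).symm⟩, hp⟩

theorem Run.enabled_of_indep {I : A → A → Prop} (hI : T.IndepRel I) {l : List A} {s t : S}
    {b : A} (h : T.Run l s t) (hl : ∀ a ∈ l, I a b ∧ a ≠ b) (hb : T.Enabled b s) :
    T.Enabled b t := by
  induction h with
  | nil => exact hb
  | cons hstep _ ih =>
    obtain ⟨hIab, hab⟩ := hl _ List.mem_cons_self
    obtain ⟨sa, -, hsa, -, hbsa, -⟩ := hI _ b _ hIab hab (by simp [Enabled, hstep]) hb
    rw [hstep, Option.some_inj] at hsa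
    exact ih (fun a ha => hl a (List.mem_cons_of_mem _ ha)) (hsa ▸ hbsa)

end TS

/-- let `Amp ⊆ enabled(s₀)` be a nonempty ample set and
`π = s₀ →α₀ ... →α_{n-1} s_n` an execution fragment ending in a deadlock state.
Assume condition C1: along every execution fragment starting at `s₀`, an action
dependent on a member of `Amp` (dependency being the complement of the
independence relation `I`) cannot occur before some member of `Amp` occurs.
Then some action `α_k` of `π` belongs to `Amp`. -/
theorem stmt3 {S A : Type} (T : TS S A) (I : A → A → Prop) (hI : T.IndepRel I)
    (Amp : Set A) (s0 : S)
    (hsub : ∀ a ∈ Amp, T.Enabled a s0)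
    (hne : Amp.Nonempty)
    (hC1 : ∀ (m : List A) (g : A) (u : S), T.Run (m ++ [g]) s0 u →
      (∃ b ∈ Amp, ¬ I g b) → ∃ a ∈ m, a ∈ Amp)
    (l : List A) (sn : S)
    (hrun : T.Run l s0 sn)
    (hdead : T.Deadlock sn) :
    ∃ a ∈ l, a ∈ Amp := by
  by_contra! hno
  obtain ⟨b, hb⟩ := hne
  have hindep : ∀ a ∈ l, I a b ∧ a ≠ b := by
    intro a ha
    refine ⟨?_, fun hab => hno a ha (hab ▸ hb)⟩
    by_contra hab
    obtain ⟨p, u, hpl, hpu⟩ := hrun.exists_prefix_concat ha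
    obtain ⟨x, hx, hxAmp⟩ := hC1 p a u hpu ⟨b, hb, hab⟩
    exact hno x (hpl.subset (List.mem_append_left _ hx)) hxAmp
  exact hdead b (hrun.enabled_of_indep hI hindep (hsub b hb))
end

section
/- (Soundness and completeness of ample-set reduction for deadlock reachability.) Let G be the full state graph of a finite acyclic action-deterministic transition system, and for each state s with enabled(s) ≠ ∅ let ample(s) ⊆ enabled(s) be nonempty (C0) and satisfy C1, where whenever ample(s) is a strict subset of enabled(s), every action in ample(s) is independent of every other action enabled in s. Let G̃ be the subgraph keeping from each state s only the transitions labeled by actions in ample(s). Then for every execution in G from an initial state σ₀ to a deadlock state σ of length n, there exists an execution in G̃ from σ₀ to σ of length n, and conversely every such execution of G̃ is one of G. -/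
namespace TS

variable {S A : Type} {T : TS S A}

def AmpleC1 (T : TS S A) (I : A → A → Prop) (amp : S → Set A) : Prop :=
  ∀ (s : S) (m : List A) (g : A) (u : S), T.Run (m ++ [g]) s u →
    (∃ b ∈ amp s, ¬ I g b) → ∃ a ∈ m, a ∈ amp s

theorem enabled_iff_exists_step {a : A} {s : S} :
    T.Enabled a s ↔ ∃ s', T.step a s = some s' :=
  Option.isSome_iff_exists

theorem enabled_of_step {a : A} {s s' : S} (h : T.step a s = some s') : T.Enabled a s :=
  enabled_iff_exists_step.2 ⟨s', h⟩

theorem Run.enabled_head {a : A} {l : List A} {s t : S} (h : T.Run (a :: l) s t) :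
    T.Enabled a s := by
  obtain _ | ⟨ha, -⟩ := h
  exact enabled_of_step ha

theorem Run.append_iff {l₁ l₂ : List A} {s t : S} :
    T.Run (l₁ ++ l₂) s t ↔ ∃ u, T.Run l₁ s u ∧ T.Run l₂ u t := by
  induction l₁ generalizing s with
  | nil => exact ⟨fun h => ⟨s, .nil s, h⟩, fun ⟨_, h₁, h₂⟩ => by cases h₁; exact h₂⟩
  | cons a l ih =>
    constructor
    · rintro (_ | ⟨hs, hr⟩)
      obtain ⟨u, h₁, h₂⟩ := ih.1 hr
      exact ⟨u, .cons hs h₁, h₂⟩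
    · rintro ⟨u, _ | ⟨hs, h₁⟩, h₂⟩
      exact .cons hs (ih.2 ⟨u, h₁, h₂⟩)

theorem ARun.toRun {amp : S → Set A} {l : List A} {s t : S} (h : T.ARun amp l s t) :
    T.Run l s t := by
  induction h with
  | nil s => exact .nil s
  | cons _ hs _ ih => exact .cons hs ih

section Independence

variable {I : A → A → Prop} {a : A} {m : List A}

theorem Run.exists_step_of_indep (hI : T.IndepRel I) {s t s' : S} (h : T.Run m s t)
    (ha : T.step a s = some s') (hm : ∀ g ∈ m, I g a ∧ g ≠ a) :
    ∃ t', T.step a t = some t' ∧ T.Run m s' t' := by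
  induction h generalizing s' with
  | nil => exact ⟨s', ha, .nil s'⟩
  | @cons g m s sg t hg hr ih =>
    obtain ⟨hIga, hne⟩ := hm g List.mem_cons_self
    obtain ⟨sg', sa, hg', ha', hEa, -, hcomm⟩ :=
      hI g a s hIga hne (enabled_of_step hg) (enabled_of_step ha)
    obtain rfl : sg' = sg := Option.some_injective _ (hg'.symm.trans hg)
    obtain rfl : sa = s' := Option.some_injective _ (ha'.symm.trans ha)
    obtain ⟨sga, hsga⟩ := enabled_iff_exists_step.1 hEa
    obtain ⟨t', ht', hr'⟩ := ih hsga fun x hx => hm x (List.mem_cons_of_mem g hx)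
    exact ⟨t', ht', .cons (hcomm ▸ hsga) hr'⟩

theorem Run.enabled_of_indep_s5 (hI : T.IndepRel I) {s t : S} (h : T.Run m s t)
    (ha : T.Enabled a s) (hm : ∀ g ∈ m, I g a ∧ g ≠ a) : T.Enabled a t := by
  obtain ⟨s', hs'⟩ := enabled_iff_exists_step.1 ha
  obtain ⟨t', ht', -⟩ := h.exists_step_of_indep hI hs' hm
  exact enabled_of_step ht'

theorem Run.exists_step_of_indep_prefix (hI : T.IndepRel I) {rest : List A} {s t : S}
    (h : T.Run (m ++ a :: rest) s t) (ha : T.Enabled a s)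
    (hm : ∀ g ∈ m, I g a ∧ g ≠ a) :
    ∃ s', T.step a s = some s' ∧ T.Run (m ++ rest) s' t := by
  obtain ⟨u, hmu, _ | ⟨hu, hrest⟩⟩ := Run.append_iff.1 h
  obtain ⟨s', hs'⟩ := enabled_iff_exists_step.1 ha
  obtain ⟨u', hu', hmu'⟩ := hmu.exists_step_of_indep hI hs' hm
  obtain rfl := Option.some_injective _ (hu'.symm.trans hu)
  exact ⟨s', hs', Run.append_iff.2 ⟨_, hmu', hrest⟩⟩

theorem AmpleC1.indep_of_run_of_forall_not_mem {amp : S → Set A} (hC1 : T.AmpleC1 I amp)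
    {s t : S} (h : T.Run m s t) (hm : ∀ y ∈ m, y ∉ amp s) :
    ∀ x ∈ m, ∀ b ∈ amp s, I x b ∧ x ≠ b := by
  intro x hx b hb
  refine ⟨by_contra fun hxb => ?_, fun hxb => hm x hx (hxb ▸ hb)⟩
  obtain ⟨m₁, m₂, rfl⟩ := List.append_of_mem hx
  obtain ⟨u, hu, -⟩ := Run.append_iff.1 (by simpa using h : T.Run ((m₁ ++ [x]) ++ m₂) s t)
  obtain ⟨y, hy, hya⟩ := hC1 s m₁ x u hu ⟨b, hb, hxb⟩
  exact hm y (List.mem_append_left _ hy) hya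

theorem Run.exists_aRun_of_deadlock (hI : T.IndepRel I) {amp : S → Set A}
    (hsub : ∀ s, ∀ a ∈ amp s, T.Enabled a s) (hC0 : ∀ s, (amp s).Nonempty ↔ ∃ a, T.Enabled a s)
    (hC1 : T.AmpleC1 I amp) {s σ : S} (hdead : T.Deadlock σ) {l : List A} (h : T.Run l s σ) :
    ∃ l' : List A, l'.length = l.length ∧ T.ARun amp l' s σ := by
  classical
  cases hfind : l.find? (· ∈ amp s) with
  | none =>
    have hl : ∀ y ∈ l, y ∉ amp s := by simpa using List.find?_eq_none.1 hfind
    rcases l with _ | ⟨a, l⟩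
    · cases h
      exact ⟨[], rfl, .nil s⟩
    · obtain ⟨b, hb⟩ := (hC0 s).2 ⟨a, h.enabled_head⟩
      have hindep := hC1.indep_of_run_of_forall_not_mem h hl
      exact (hdead b (h.enabled_of_indep_s5 hI (hsub s b hb) fun x hx => hindep x hx b hb)).elim
  | some g =>
    obtain ⟨hg, m, rest, rfl, hm⟩ := List.find?_eq_some_iff_append.1 hfind
    replace hg : g ∈ amp s := by simpa using hg
    replace hm : ∀ y ∈ m, y ∉ amp s := by simpa using hm
    obtain ⟨_, hmu, -⟩ := Run.append_iff.1 h
    obtain ⟨s', hs', h'⟩ := h.exists_step_of_indep_prefix hI (hsub s g hg)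
      fun x hx => hC1.indep_of_run_of_forall_not_mem hmu hm x hx g hg
    obtain ⟨l', hl', h''⟩ := h'.exists_aRun_of_deadlock hI hsub hC0 hC1 hdead
    refine ⟨g :: l', ?_, .cons hg hs' h''⟩
    simp only [List.length_cons, List.length_append, hl']
    omega
termination_by l.length
decreasing_by all_goals simp_all

end Independence

end TS

theorem stmt5_general {S A : Type} (T : TS S A) (I : A → A → Prop)
    (hI : T.IndepRel I)
    (amp : S → Set A)
    (hsub : ∀ (s : S), ∀ a ∈ amp s, T.Enabled a s)
    (hC0 : ∀ s : S, (amp s).Nonempty ↔ ∃ a, T.Enabled a s)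
    (hC1 : ∀ (s : S) (m : List A) (g : A) (u : S), T.Run (m ++ [g]) s u →
      (∃ b ∈ amp s, ¬ I g b) → ∃ a ∈ m, a ∈ amp s)
    (σ0 σ : S) (hdead : T.Deadlock σ) (l : List A) :
    (T.Run l σ0 σ → ∃ l' : List A, l'.length = l.length ∧ T.ARun amp l' σ0 σ) ∧
    (T.ARun amp l σ0 σ → T.Run l σ0 σ) :=
  ⟨fun h => h.exists_aRun_of_deadlock hI hsub hC0 hC1 hdead, TS.ARun.toRun⟩

/-- soundness and completeness of ample-set reduction for deadlock
reachability: in a finite acyclic action-deterministic transition system, let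
`amp s ⊆ enabled(s)` be nonempty exactly when `enabled(s)` is nonempty (C0) and
satisfy C1 at every state, and suppose that whenever `amp s` is a strict subset
of `enabled(s)`, every action of `amp s` is independent of every other action
enabled at `s`. Then for every execution in the full graph from `σ₀` to a
deadlock state `σ` of length `n` there is an execution of length `n` from `σ₀`
to `σ` in the reduced graph (keeping from each state only the transitions
labeled by ample actions), and conversely every such reduced execution is an
execution of the full graph. -/
theorem stmt5 {S A : Type} [Fintype S] (T : TS S A) (I : A → A → Prop)
    (hI : T.IndepRel I)
    (amp : S → Set A)
    (hacyc : ∀ (s : S) (l : List A), l ≠ [] → T.Run l s s → False)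
    (hsub : ∀ (s : S), ∀ a ∈ amp s, T.Enabled a s)
    (hC0 : ∀ s : S, (amp s).Nonempty ↔ ∃ a, T.Enabled a s)
    (hC1 : ∀ (s : S) (m : List A) (g : A) (u : S), T.Run (m ++ [g]) s u →
      (∃ b ∈ amp s, ¬ I g b) → ∃ a ∈ m, a ∈ amp s)
    (hind : ∀ s : S, (∃ b, T.Enabled b s ∧ b ∉ amp s) →
      ∀ a ∈ amp s, ∀ b, T.Enabled b s → b ≠ a → I a b)
    (σ0 σ : S) (hdead : T.Deadlock σ) (l : List A) :
    (T.Run l σ0 σ → ∃ l' : List A, l'.length = l.length ∧ T.ARun amp l' σ0 σ) ∧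
    (T.ARun amp l σ0 σ → T.Run l σ0 σ) :=
  stmt5_general T I hI amp hsub hC0 hC1 σ0 σ hdead l
end
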